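/- arXiv:2504.06242 — 3 statements merged into one kernel-verified Lean document; each statement's English description precedes it below -/
import Mathlib

section
/- Let h: ℝ → ℝ be differentiable with ḣ(t) ≥ -γ(h(t)) for all t, where γ is a locally Lipschitz extended class-K function. If h(0) ≥ 0, then h(t) ≥ 0 for all t ≥ 0. -/
def ClassKe (γ : ℝ → ℝ) : Prop := Continuous γ ∧ StrictMono γ ∧ γ 0 = 0

theorem comparison_nonneg (h : ℝ → ℝ) (γ : ℝ → ℝ)
    (hγ : ClassKe γ) (hlip : LocallyLipschitz γ)
    (hdiff : Differentiable ℝ h)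
    (hineq : ∀ t : ℝ, deriv h t ≥ -γ (h t))
    (h0 : h 0 ≥ 0) :
    ∀ t : ℝ, t ≥ 0 → h t ≥ 0 := by
  obtain ⟨hcontγ, hmono, hzero⟩ := hγ
  intro t ht
  by_contra hneg
  push_neg at hneg
  have hcont : Continuous h := hdiff.continuous
  -- find a zero of h in [0, t]
  set S : Set ℝ := {u | u ∈ Set.Icc 0 t ∧ h u = 0} with hS
  have hSne : S.Nonempty := by
    have : (0:ℝ) ∈ Set.Icc (h t) (h 0) := ⟨le_of_lt hneg, h0⟩
    obtain ⟨u, hu, hu0⟩ := intermediate_value_Icc' ht hcont.continuousOn this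
    exact ⟨u, hu, hu0⟩
  have hSclosed : IsClosed S := by
    have : S = Set.Icc 0 t ∩ h ⁻¹' {0} := by
      ext u; simp [hS, Set.mem_Icc]
    rw [this]
    exact isClosed_Icc.inter (isClosed_singleton.preimage hcont)
  have hSbdd : BddAbove S := ⟨t, fun u hu => hu.1.2⟩
  set s := sSup S with hs
  have hsS : s ∈ S := hSclosed.csSup_mem hSne hSbdd
  have hs0 : h s = 0 := hsS.2
  have hst : s ≤ t := hsS.1.2
  have hs0le : 0 ≤ s := hsS.1.1
  -- h u < 0 on (s, t]
  have hltzero : ∀ u, s < u → u ≤ t → h u < 0 := by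
    intro u hsu hut
    by_contra hge
    push_neg at hge
    have : (0:ℝ) ∈ Set.Icc (h t) (h u) := ⟨le_of_lt hneg, hge⟩
    obtain ⟨v, hv, hv0⟩ := intermediate_value_Icc' hut hcont.continuousOn this
    have hvS : v ∈ S := ⟨⟨le_trans hs0le (le_trans (le_of_lt hsu) hv.1), hv.2⟩, hv0⟩
    have : v ≤ s := le_csSup hSbdd hvS
    linarith [hv.1]
  -- h u ≤ 0 on [s, t], so deriv h ≥ 0 there
  have hmonoOn : MonotoneOn h (Set.Icc s t) := by
    apply monotoneOn_of_deriv_nonneg (convex_Icc s t) hcont.continuousOn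
      (fun x _ => (hdiff x).differentiableWithinAt)
    intro x hx
    rw [interior_Icc] at hx
    have hxle : h x ≤ 0 := le_of_lt (hltzero x hx.1 (le_of_lt hx.2))
    have : γ (h x) ≤ 0 := by
      calc γ (h x) ≤ γ 0 := hmono.monotone hxle
        _ = 0 := hzero
    have := hineq x
    linarith
  have : h s ≤ h t := hmonoOn ⟨le_refl s, hst⟩ ⟨hst, le_refl t⟩ hst
  linarith
end

section
/- Let h: ℝ → ℝ be differentiable with ḣ(t) ≥ -γ(h(t)) for all t, where γ is a locally Lipschitz extended class-K function. If h(0) > 0, then h(t) > 0 for all t ≥ 0. -/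
open Set Filter Topology Real

lemma ContinuousOn.exists_first_root {h : ℝ → ℝ} {a b : ℝ} (hab : a ≤ b)
    (hh : ContinuousOn h (Icc a b)) (ha : 0 < h a) (hb : h b ≤ 0) :
    ∃ c ∈ Ioc a b, h c = 0 ∧ ∀ t ∈ Ico a c, 0 < h t := by
  set S := Icc a b ∩ h ⁻¹' Iic 0
  have hS : IsCompact S :=
    isCompact_Icc.of_isClosed_subset (hh.preimage_isClosed_of_isClosed isClosed_Icc isClosed_Iic)
      inter_subset_left
  obtain ⟨c, ⟨⟨hac, hcb⟩, hc⟩, hcmin⟩ := hS.exists_isLeast ⟨b, right_mem_Icc.mpr hab, hb⟩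
  have hpos : ∀ t ∈ Ico a c, 0 < h t := fun t ⟨hat, htc⟩ =>
    lt_of_not_ge fun ht => htc.not_ge (hcmin ⟨⟨hat, htc.le.trans hcb⟩, ht⟩)
  have hac' : a < c := hac.lt_of_ne (by rintro rfl; exact (ha.trans_le hc).false)
  refine ⟨c, ⟨hac', hcb⟩, le_antisymm hc (le_of_not_gt fun hneg => ?_), hpos⟩
  obtain ⟨d, ⟨had, hdc⟩, hd⟩ :=
    intermediate_value_Icc' hac (hh.mono (Icc_subset_Icc_right hcb)) ⟨hneg.le, ha.le⟩
  have hdc' : d < c := hdc.lt_of_ne (by rintro rfl; exact hneg.ne hd)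
  exact (hpos d ⟨had, hdc'⟩).ne' hd

lemma LocallyLipschitz.exists_eventually_dist_le_mul {α β : Type*} [PseudoMetricSpace α]
    [PseudoMetricSpace β] {γ : α → β} (hγ : LocallyLipschitz γ) (x₀ : α) :
    ∃ K : ℝ, ∀ᶠ x in 𝓝 x₀, dist (γ x) (γ x₀) ≤ K * dist x x₀ := by
  obtain ⟨K, U, hU, hlip⟩ := hγ x₀
  exact ⟨K, eventually_of_mem hU fun x hx => hlip.dist_le_mul x hx x₀ (mem_of_mem_nhds hU)⟩

lemma monotoneOn_mul_exp_of_neg_mul_le_deriv {D : Set ℝ} (hD : Convex ℝ D) {h : ℝ → ℝ} {K : ℝ}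
    (hc : ContinuousOn h D) (hd : DifferentiableOn ℝ h (interior D))
    (hK : ∀ t ∈ interior D, -(K * h t) ≤ deriv h t) :
    MonotoneOn (fun t => h t * exp (K * t)) D := by
  have hexp : ∀ t, HasDerivAt (fun t => exp (K * t)) (exp (K * t) * K) t := fun t => by
    simpa using ((hasDerivAt_id t).const_mul K).exp
  have hderiv : ∀ t ∈ interior D,
      HasDerivAt (fun t => h t * exp (K * t)) ((deriv h t + K * h t) * exp (K * t)) t :=
    fun t ht => (((hd t ht).differentiableAt (isOpen_interior.mem_nhds ht)).hasDerivAt.mul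
      (hexp t)).congr_deriv (by ring)
  refine monotoneOn_of_deriv_nonneg hD
    (hc.mul (continuous_exp.comp (continuous_const.mul continuous_id)).continuousOn)
    (fun t ht => (hderiv t ht).differentiableAt.differentiableWithinAt) fun t ht => ?_
  rw [(hderiv t ht).deriv]
  exact mul_nonneg (by linarith [hK t ht]) (exp_pos _).le

lemma pos_of_pos_of_neg_mul_le_deriv {h : ℝ → ℝ} {K a b : ℝ} (hab : a ≤ b)
    (hc : ContinuousOn h (Icc a b)) (hd : DifferentiableOn ℝ h (Ioo a b))
    (hK : ∀ t ∈ Ioo a b, -(K * h t) ≤ deriv h t) (ha : 0 < h a) : 0 < h b := by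
  have hmono := monotoneOn_mul_exp_of_neg_mul_le_deriv (convex_Icc a b) hc
    (by rwa [interior_Icc]) (by rwa [interior_Icc])
    (left_mem_Icc.mpr hab) (right_mem_Icc.mpr hab) hab
  exact pos_of_mul_pos_left ((mul_pos ha (exp_pos _)).trans_le hmono) (exp_pos _).le

theorem comparison_pos (h : ℝ → ℝ) (γ : ℝ → ℝ)
    (hγ : ClassKe γ) (hlip : LocallyLipschitz γ)
    (hdiff : Differentiable ℝ h)
    (hineq : ∀ t : ℝ, deriv h t ≥ -γ (h t))
    (h0 : h 0 > 0) :
    ∀ t : ℝ, t ≥ 0 → h t > 0 := by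
  intro t₀ ht₀
  by_contra! hneg
  obtain ⟨T, ⟨hT0, -⟩, hT, hpos⟩ := hdiff.continuous.continuousOn.exists_first_root ht₀ h0 hneg
  obtain ⟨K, hK⟩ := hlip.exists_eventually_dist_le_mul 0
  have hlin : ∀ᶠ t in 𝓝[<] T, -(K * h t) ≤ deriv h t := by
    have hh : Tendsto h (𝓝[<] T) (𝓝 0) :=
      hT ▸ hdiff.continuous.continuousAt.tendsto.mono_left nhdsWithin_le_nhds
    filter_upwards [hh.eventually hK, Ioo_mem_nhdsLT hT0] with t hKt ht
    rw [Real.dist_eq, Real.dist_eq, hγ.2.2, sub_zero, sub_zero,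
      abs_of_pos (hpos t ⟨ht.1.le, ht.2⟩)] at hKt
    linarith [le_abs_self (γ (h t)), hineq t]
  obtain ⟨s, hsT, hs⟩ := mem_nhdsLT_iff_exists_Ioo_subset.mp hlin
  have hs'T : max s 0 < T := max_lt hsT hT0
  refine (pos_of_pos_of_neg_mul_le_deriv hs'T.le hdiff.continuous.continuousOn
    hdiff.differentiableOn (fun t ht => hs (Ioo_subset_Ioo_left (le_max_left _ _) ht))
    (hpos _ ⟨le_max_right _ _, hs'T⟩)).ne' hT
end

section
/- Let ẋ = f(x) with f Lipschitz continuous on ℝ^n, and let C = {x : h(x) ≥ 0} for a C¹ function h. If along every solution x(t) one has (d/dt) h(x(t)) ≥ −γ(h(x(t))) for a locally Lipschitz extended class-K function γ, then C is forward invariant: x(0) ∈ C implies x(t) ∈ C for all t ≥ 0 in the interval of existence. -/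
open Set

lemma ClassKe.apply_neg {γ : ℝ → ℝ} (hγ : ClassKe γ) {r : ℝ} (hr : r < 0) : γ r < 0 :=
  hγ.2.2 ▸ hγ.2.1 hr

/-- Take the last time `s` before `b` at which `y` is nonnegative; on `[s, b]` the derivative is
positive, so `y b > y s ≥ 0`. -/
theorem ContinuousOn.nonneg_of_deriv_pos_of_neg {y : ℝ → ℝ} {a b : ℝ} (hab : a ≤ b)
    (hy : ContinuousOn y (Icc a b)) (ha : 0 ≤ y a)
    (hderiv : ∀ t ∈ Ioo a b, y t < 0 → 0 < deriv y t) : 0 ≤ y b := by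
  by_contra! hb
  set S := Icc a b ∩ y ⁻¹' Ici 0
  have hS : IsCompact S :=
    isCompact_Icc.of_isClosed_subset (hy.preimage_isClosed_of_isClosed isClosed_Icc isClosed_Ici)
      inter_subset_left
  have hsS : sSup S ∈ S := hS.sSup_mem ⟨a, ⟨left_mem_Icc.2 hab, ha⟩⟩
  obtain ⟨⟨has, hsb⟩, hys⟩ := hsS
  have hsb' : sSup S < b := hsb.lt_of_ne fun h => (h ▸ hys : 0 ≤ y b).not_gt hb
  have hneg : ∀ t ∈ Ioc (sSup S) b, y t < 0 := fun t ht => by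
    by_contra! hyt
    exact ht.1.not_ge (le_csSup hS.bddAbove ⟨⟨has.trans ht.1.le, ht.2⟩, hyt⟩)
  have hmono : StrictMonoOn y (Icc (sSup S) b) := by
    refine strictMonoOn_of_deriv_pos (convex_Icc _ _) (hy.mono (Icc_subset_Icc_left has)) ?_
    rw [interior_Icc]
    exact fun t ht => hderiv t ⟨has.trans_lt ht.1, ht.2⟩ (hneg t (Ioo_subset_Ioc_self ht))
  exact (hmono ⟨le_rfl, hsb⟩ ⟨hsb, le_rfl⟩ hsb').not_ge (hb.le.trans hys)

theorem forward_invariance_superlevel_general (n : ℕ)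
    (f : EuclideanSpace ℝ (Fin n) → EuclideanSpace ℝ (Fin n))
    (h : EuclideanSpace ℝ (Fin n) → ℝ) (hh : ContDiff ℝ 1 h)
    (γ : ℝ → ℝ) (hγ : ClassKe γ)
    (T : ℝ) (x : ℝ → EuclideanSpace ℝ (Fin n))
    (hsol : ∀ t ∈ Set.Ico (0 : ℝ) T, HasDerivAt x (f (x t)) t)
    (hineq : ∀ t ∈ Set.Ico (0 : ℝ) T, deriv (fun s => h (x s)) t ≥ -γ (h (x t)))
    (h0 : h (x 0) ≥ 0) :
    ∀ t ∈ Set.Ico (0 : ℝ) T, h (x t) ≥ 0 := by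
  intro t₀ ht₀
  have hsub : Icc 0 t₀ ⊆ Ico 0 T := Icc_subset_Ico_right ht₀.2
  have hcont : ContinuousOn (fun s => h (x s)) (Icc 0 t₀) := fun t ht =>
    ((hh.continuous.continuousAt).comp (hsol t (hsub ht)).continuousAt).continuousWithinAt
  refine hcont.nonneg_of_deriv_pos_of_neg ht₀.1 h0 fun t ht hyt => ?_
  calc 0 < -γ (h (x t)) := neg_pos.2 (hγ.apply_neg hyt)
    _ ≤ _ := hineq t (hsub (Ioo_subset_Icc_self ht))

theorem forward_invariance_superlevel (n : ℕ) (K : NNReal)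
    (f : EuclideanSpace ℝ (Fin n) → EuclideanSpace ℝ (Fin n))
    (hf : LipschitzWith K f)
    (h : EuclideanSpace ℝ (Fin n) → ℝ) (hh : ContDiff ℝ 1 h)
    (γ : ℝ → ℝ) (hγ : ClassKe γ) (hγlip : LocallyLipschitz γ)
    (T : ℝ) (x : ℝ → EuclideanSpace ℝ (Fin n))
    (hsol : ∀ t ∈ Set.Ico (0 : ℝ) T, HasDerivAt x (f (x t)) t)
    (hineq : ∀ t ∈ Set.Ico (0 : ℝ) T, deriv (fun s => h (x s)) t ≥ -γ (h (x t)))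
    (h0 : h (x 0) ≥ 0) (hT : 0 < T) :
    ∀ t ∈ Set.Ico (0 : ℝ) T, h (x t) ≥ 0 :=
  forward_invariance_superlevel_general n f h hh γ hγ T x hsol hineq h0
end
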